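/- Let n ≥ 1, d ≥ 1, D ≥ 1, and for each y ∈ [n] let (M_{b|y})_{b∈[d]} be a d-outcome POVM on ℂ^D. For each x ∈ [d]^n define the traceless Hermitian operator O_x = Σ_{y=1}^n ( M_{x_y|y} − (Tr(M_{x_y|y})/D)·𝟙 ), where 𝟙 is the D×D identity. Then Σ_{x∈[d]^n} Tr(O_x²) ≤ (D-1) · n · d^{n-1}. -/

import Mathlib

open scoped ComplexOrder

/-- A quantum state on `ℂ^D`: a `D×D` positive semidefinite complex matrix of trace one. -/
def IsState {D : ℕ} (ρ : Matrix (Fin D) (Fin D) ℂ) : Prop :=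
  ρ.PosSemidef ∧ ρ.trace = 1

/-- A `d`-outcome POVM on `ℂ^D`: a family of `D×D` positive semidefinite complex matrices
summing to the identity. -/
def IsPOVM {d D : ℕ} (M : Fin d → Matrix (Fin D) (Fin D) ℂ) : Prop :=
  (∀ b, (M b).PosSemidef) ∧ ∑ b, M b = 1

/-!
Write `O_x = Σ_y A_{y, x_y}` with `A_{y,b} = M_{b|y} - (Tr M_{b|y} / D) • 1`. Since
`Σ_b A_{y,b} = 0`, summing over `x` kills every cross term `Tr (A_{y, x_y} A_{z, x_z})` with
`y ≠ z`, leaving `d^(n-1) Σ_y Σ_b Tr (A_{y,b}²)`. The eigenvalues of a POVM element `M` lie in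
`[0, 1]`, so `Tr M² ≤ min (Tr M) (Tr M)²`, whence `Tr (A²) = Tr M² - (Tr M)² / D ≤ (1 - 1/D) Tr M`;
summing over `b` with `Σ_b Tr M_b = D` gives `D - 1` for each `y`.
-/

open Matrix Finset
open scoped MatrixOrder

section SumOverFunctions

variable {ι κ α : Type*} [Fintype ι] [DecidableEq ι] [Fintype κ] [AddCommMonoid α]

theorem Fintype.sum_comp_eval (y : ι) (f : κ → α) :
    ∑ x : ι → κ, f (x y) = Fintype.card κ ^ (Fintype.card ι - 1) • ∑ b, f b := by
  rw [← (Equiv.piSplitAt y fun _ => κ).symm.sum_comp]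
  simp [Fintype.sum_prod_type, Fintype.card_subtype_compl, smul_sum]

theorem Fintype.sum_comp_eval₂ {y z : ι} (hyz : y ≠ z) (f : κ → κ → α) :
    ∑ x : ι → κ, f (x y) (x z) =
      Fintype.card κ ^ (Fintype.card ι - 2) • ∑ b, ∑ c, f b c := by
  rw [← (Equiv.piSplitAt y fun _ => κ).symm.sum_comp]
  simp only [Fintype.sum_prod_type, Equiv.piSplitAt_symm_apply, dif_neg hyz.symm, dite_true,
    fun b => Fintype.sum_comp_eval (⟨z, hyz.symm⟩ : {j // j ≠ y}) (f b),
    Fintype.card_subtype_compl, Fintype.card_unique, Nat.sub_sub, ← smul_sum]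

theorem Fintype.sum_mul_self_sum_comp_eval_of_sum_eq_zero {R : Type*} [NonUnitalNonAssocSemiring R]
    (a : ι → κ → R) (ha : ∀ y, ∑ b, a y b = 0) :
    ∑ x : ι → κ, (∑ y, a y (x y)) * (∑ y, a y (x y)) =
      Fintype.card κ ^ (Fintype.card ι - 1) • ∑ y, ∑ b, a y b * a y b := by
  have cross (y z : ι) (hyz : y ≠ z) : ∑ x : ι → κ, a y (x y) * a z (x z) = 0 := by
    rw [Fintype.sum_comp_eval₂ hyz (fun b c => a y b * a z c), ← sum_mul_sum, ha, zero_mul,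
      smul_zero]
  simp only [sum_mul_sum]
  rw [sum_comm, smul_sum]
  refine Finset.sum_congr rfl fun y _ => ?_
  rw [sum_comm, Fintype.sum_eq_single y fun z hzy => cross y z hzy.symm,
    Fintype.sum_comp_eval y fun b => a y b * a y b, smul_sum]

end SumOverFunctions

namespace Matrix

variable {𝕜 n : Type*} [RCLike 𝕜] [Fintype n] {A : Matrix n n 𝕜}

theorem IsHermitian.ofReal_re_trace (hA : A.IsHermitian) :
    ((RCLike.re A.trace : ℝ) : 𝕜) = A.trace :=
  RCLike.conj_eq_iff_re.mp (by rw [← RCLike.star_def, ← trace_conjTranspose, hA.eq])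

variable [DecidableEq n]

theorem IsHermitian.trace_cfc (hA : A.IsHermitian) (f : ℝ → ℝ) :
    (cfc f A).trace = ∑ i, (f (hA.eigenvalues i) : 𝕜) := by
  rw [hA.cfc_eq, IsHermitian.cfc, Unitary.conjStarAlgAut_apply, trace_mul_cycle,
    Unitary.coe_star_mul_self, one_mul, trace_diagonal]
  rfl

theorem IsHermitian.trace_mul_self (hA : A.IsHermitian) :
    (A * A).trace = ∑ i, ((hA.eigenvalues i ^ 2 : ℝ) : 𝕜) := by
  rw [← sq, ← cfc_pow_id (R := ℝ) A 2 hA.isSelfAdjoint, hA.trace_cfc]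

theorem IsHermitian.eigenvalues_le_one (hA : A.IsHermitian) (h1 : (1 - A).PosSemidef) (i : n) :
    hA.eigenvalues i ≤ 1 :=
  (CFC.le_one_iff A hA.isSelfAdjoint).mp (le_iff.mpr h1) _ (hA.eigenvalues_mem_spectrum_real i)

theorem PosSemidef.re_trace_mul_self_le_sq (hA : A.PosSemidef) :
    RCLike.re (A * A).trace ≤ RCLike.re A.trace ^ 2 := by
  simp only [hA.1.trace_mul_self, hA.1.trace_eq_sum_eigenvalues, map_sum, RCLike.ofReal_re]
  exact sum_sq_le_sq_sum_of_nonneg fun i _ => hA.eigenvalues_nonneg i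

theorem PosSemidef.re_trace_mul_self_le (hA : A.PosSemidef) (h1 : (1 - A).PosSemidef) :
    RCLike.re (A * A).trace ≤ RCLike.re A.trace := by
  simp only [hA.1.trace_mul_self, hA.1.trace_eq_sum_eigenvalues, map_sum, RCLike.ofReal_re]
  gcongr with i
  nlinarith [hA.eigenvalues_nonneg i, hA.1.eigenvalues_le_one h1 i]

theorem trace_sub_smul_one_mul_self (A : Matrix n n 𝕜) (c : 𝕜) :
    ((A - c • 1) * (A - c • 1)).trace =
      (A * A).trace - 2 * c * A.trace + c ^ 2 * Fintype.card n := by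
  simp only [sub_mul, mul_sub, Matrix.smul_mul, Matrix.mul_smul, one_mul, mul_one, smul_smul,
    trace_sub, trace_smul, trace_one, smul_eq_mul]
  ring

end Matrix

namespace IsPOVM

variable {d D : ℕ} {N : Fin d → Matrix (Fin D) (Fin D) ℂ}

theorem sum_trace (hN : IsPOVM N) : ∑ b, (N b).trace = D := by
  rw [← trace_sum, hN.2, trace_one, Fintype.card_fin]

theorem posSemidef_one_sub (hN : IsPOVM N) (b : Fin d) : (1 - N b).PosSemidef := by
  rw [← hN.2, ← add_sum_erase _ _ (mem_univ b), add_sub_cancel_left]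
  exact posSemidef_sum _ fun c _ => hN.1 c

theorem sum_sub_trace_div_smul_one_eq_zero (hN : IsPOVM N) :
    ∑ b, (N b - ((N b).trace / D) • 1) = 0 := by
  rcases Nat.eq_zero_or_pos D with rfl | hD
  · exact Subsingleton.elim _ _
  rw [sum_sub_distrib, ← sum_smul, ← sum_div, hN.sum_trace, div_self (by positivity), one_smul,
    hN.2, sub_self]

theorem re_trace_sub_mul_self_le (hN : IsPOVM N) (hD : 1 ≤ D) (b : Fin d) :
    ((N b - ((N b).trace / D) • 1) * (N b - ((N b).trace / D) • 1)).trace.re ≤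
      (1 - 1 / D) * (N b).trace.re := by
  have hD' : (1 : ℝ) ≤ D := by exact_mod_cast hD
  set s := (N b * N b).trace.re
  set t := (N b).trace.re
  have hs_sq : s ≤ t ^ 2 := (hN.1 b).re_trace_mul_self_le_sq
  have hs : s ≤ t := (hN.1 b).re_trace_mul_self_le (hN.posSemidef_one_sub b)
  have expand : ((N b - ((N b).trace / D) • 1) * (N b - ((N b).trace / D) • 1)).trace.re =
      s - t ^ 2 / D := by
    have hT : (N b).trace = t := (hN.1 b).1.ofReal_re_trace.symm
    rw [trace_sub_smul_one_mul_self, hT, Fintype.card_fin]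
    have hD0 : (D : ℂ) ≠ 0 := by positivity
    have : (N b * N b).trace - 2 * ((t : ℂ) / D) * t + ((t : ℂ) / D) ^ 2 * D =
        (N b * N b).trace - ((t ^ 2 / D : ℝ) : ℂ) := by
      push_cast
      field_simp
      ring
    rw [this, Complex.sub_re, Complex.ofReal_re]
  calc _ = s - t ^ 2 / D := expand
    _ ≤ s - s / D := by gcongr
    _ = (1 - 1 / D) * s := by ring
    _ ≤ (1 - 1 / D) * t := by
      gcongr
      exact sub_nonneg.mpr (div_le_one_of_le₀ hD' (by positivity))

theorem sum_re_trace_sub_mul_self_le (hN : IsPOVM N) (hD : 1 ≤ D) :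
    ∑ b, ((N b - ((N b).trace / D) • 1) * (N b - ((N b).trace / D) • 1)).trace.re ≤
      D - 1 := by
  have hD0 : (D : ℝ) ≠ 0 := by positivity
  calc _ ≤ ∑ b, (1 - 1 / D) * (N b).trace.re :=
        sum_le_sum fun b _ => hN.re_trace_sub_mul_self_le hD b
    _ = (1 - 1 / D) * D := by rw [← mul_sum, ← Complex.re_sum, hN.sum_trace, Complex.natCast_re]
    _ = D - 1 := by field_simp

end IsPOVM

theorem sum_trace_sq_Ox_le_general {n d D : ℕ} (hD : 1 ≤ D)
    (M : Fin n → Fin d → Matrix (Fin D) (Fin D) ℂ)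
    (hM : ∀ y, IsPOVM (M y)) :
    ∑ x : Fin n → Fin d,
        (((∑ y : Fin n,
              (M y (x y) - ((M y (x y)).trace / (D : ℂ)) • (1 : Matrix (Fin D) (Fin D) ℂ))) *
          (∑ y : Fin n,
              (M y (x y) - ((M y (x y)).trace / (D : ℂ)) • (1 : Matrix (Fin D) (Fin D) ℂ)))).trace).re
      ≤ ((D : ℝ) - 1) * (n : ℝ) * (d : ℝ) ^ (n - 1) := by
  set O : Fin n → Fin d → Matrix (Fin D) (Fin D) ℂ :=
    fun y b => M y b - ((M y b).trace / D) • 1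
  calc _ = (d : ℝ) ^ (n - 1) * ∑ y, ∑ b, (O y b * O y b).trace.re := by
        rw [← Complex.re_sum, ← trace_sum,
          Fintype.sum_mul_self_sum_comp_eval_of_sum_eq_zero O
            fun y => (hM y).sum_sub_trace_div_smul_one_eq_zero,
          trace_smul, Complex.re_nsmul, nsmul_eq_mul]
        simp only [Fintype.card_fin, Nat.cast_pow, trace_sum, Complex.re_sum]
    _ ≤ (d : ℝ) ^ (n - 1) * ∑ _y : Fin n, ((D : ℝ) - 1) := by
        gcongr with y
        exact (hM y).sum_re_trace_sub_mul_self_le hD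
    _ = _ := by simp; ring

/-- The key intermediate trace bound in the proof of Result 1: with
`O_x = Σ_y (M_{x_y|y} − (Tr(M_{x_y|y})/D)·𝟙)`, one has
`Σ_x Tr(O_x²) ≤ (D-1)·n·d^(n-1)`. -/
theorem sum_trace_sq_Ox_le {n d D : ℕ} (hn : 1 ≤ n) (hd : 1 ≤ d) (hD : 1 ≤ D)
    (M : Fin n → Fin d → Matrix (Fin D) (Fin D) ℂ)
    (hM : ∀ y, IsPOVM (M y)) :
    ∑ x : Fin n → Fin d,
        (((∑ y : Fin n,
              (M y (x y) - ((M y (x y)).trace / (D : ℂ)) • (1 : Matrix (Fin D) (Fin D) ℂ))) *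
          (∑ y : Fin n,
              (M y (x y) - ((M y (x y)).trace / (D : ℂ)) • (1 : Matrix (Fin D) (Fin D) ℂ)))).trace).re
      ≤ ((D : ℝ) - 1) * (n : ℝ) * (d : ℝ) ^ (n - 1) :=
  sum_trace_sq_Ox_le_general hD M hM
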